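/- arXiv:1611.03246 — 2 statements merged into one kernel-verified Lean document; each statement's English description precedes it below -/
import Mathlib

section
/- If ℓ(x) = ω·x + c with h(ω) = 1 and ℓ ≥ 0 on a convex set K, and if B is a ball (anisotropic ball C_R(P)) contained in K touching ∂K at p with interior normal ω₀, then ℓ(P) ≥ ℓ_p(P), where ℓ_p(x) := (ω₀/h(ω₀))·(x − p). Consequently d_K(P) = ℓ_p(P) = ‖P − p‖_C. -/
open Set Metric
open scoped RealInnerProductSpace Classical

noncomputable section

/-- positive 1-homogeneity of `h` -/
def IsPosHom {n : ℕ} (h : EuclideanSpace ℝ (Fin n) → ℝ) : Prop :=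
  ∀ t : ℝ, 0 < t → ∀ x, h (t • x) = t * h x

/-- the convex body `C = ⋂_{ω ∈ S^{n-1}} {x : x·ω ≤ h(ω)}` -/
def setC {n : ℕ} (h : EuclideanSpace ℝ (Fin n) → ℝ) : Set (EuclideanSpace ℝ (Fin n)) :=
  ⋂ ω ∈ sphere (0 : EuclideanSpace ℝ (Fin n)) 1, {x | ⟪x, ω⟫ ≤ h ω}

/-- the gauge norm `‖p‖_C = 1 / sup{τ>0 : τp ∈ C}` (with `‖0‖_C = 0`) -/
def normC {n : ℕ} (C : Set (EuclideanSpace ℝ (Fin n))) (p : EuclideanSpace ℝ (Fin n)) : ℝ :=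
  if p = 0 then 0 else 1 / sSup {τ : ℝ | 0 < τ ∧ τ • p ∈ C}

/-- the anisotropic ball `C_R(z₀) = z₀ + R·C` -/
def ballC {n : ℕ} (C : Set (EuclideanSpace ℝ (Fin n))) (z₀ : EuclideanSpace ℝ (Fin n)) (R : ℝ) :
    Set (EuclideanSpace ℝ (Fin n)) := {x | ∃ y ∈ C, x = z₀ + R • y}

/-- values `ℓ(x) = ω·x + c` of affine functions with `h(ω)=1` that are nonnegative on `K` -/
def admissible {n : ℕ} (h : EuclideanSpace ℝ (Fin n) → ℝ) (K : Set (EuclideanSpace ℝ (Fin n)))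
    (x : EuclideanSpace ℝ (Fin n)) : Set ℝ :=
  {v | ∃ ω c, h ω = 1 ∧ (∀ y ∈ K, 0 ≤ ⟪ω, y⟫ + c) ∧ v = ⟪ω, x⟫ + c}

/-- the anisotropic signed distance function `d_K` -/
def dK {n : ℕ} (h : EuclideanSpace ℝ (Fin n) → ℝ) (K : Set (EuclideanSpace ℝ (Fin n)))
    (x : EuclideanSpace ℝ (Fin n)) : ℝ := sInf (admissible h K x)

/-- `∂C` is `C¹`: the (outer unit normal of the) supporting hyperplane at any
boundary point is unique -/
def UniqueSupport {n : ℕ} (C : Set (EuclideanSpace ℝ (Fin n))) : Prop :=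
  ∀ P ∈ frontier C, ∀ ω₁ ∈ sphere (0 : EuclideanSpace ℝ (Fin n)) 1,
    ∀ ω₂ ∈ sphere (0 : EuclideanSpace ℝ (Fin n)) 1,
      (∀ x ∈ C, ⟪ω₁, x - P⟫ ≤ 0) → (∀ x ∈ C, ⟪ω₂, x - P⟫ ≤ 0) → ω₁ = ω₂

variable {n : ℕ} {h : EuclideanSpace ℝ (Fin n) → ℝ}

lemma memC_iff {x : EuclideanSpace ℝ (Fin n)} :
    x ∈ setC h ↔ ∀ ω : EuclideanSpace ℝ (Fin n), ‖ω‖ = 1 → ⟪x, ω⟫ ≤ h ω := by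
  simp [setC, mem_sphere_zero_iff_norm]

lemma closedC : IsClosed (setC h) := by
  refine isClosed_biInter fun ω _ => ?_
  exact isClosed_le (continuous_inner.comp (continuous_id.prodMk continuous_const)) continuous_const

lemma symmC (heven : ∀ x, h (-x) = h x) {x : EuclideanSpace ℝ (Fin n)}
    (hx : x ∈ setC h) : -x ∈ setC h := by
  rw [memC_iff] at hx ⊢
  intro ω hω
  have := hx (-ω) (by simpa using hω)
  simpa [heven, inner_neg_neg] using this

lemma memC_le (hhom : IsPosHom h) {x ω : EuclideanSpace ℝ (Fin n)} (hω : ω ≠ 0)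
    (hx : x ∈ setC h) : ⟪x, ω⟫ ≤ h ω := by
  have hn : (0:ℝ) < ‖ω‖ := norm_pos_iff.mpr hω
  have hu : ‖(‖ω‖⁻¹ • ω : EuclideanSpace ℝ (Fin n))‖ = 1 := by
    simp [norm_smul, abs_of_pos (inv_pos.mpr hn), inv_mul_cancel₀ hn.ne']
  have h1 := (memC_iff.mp hx) _ hu
  have h2 : h ω = ‖ω‖ * h (‖ω‖⁻¹ • ω) := by
    have := hhom ‖ω‖ hn (‖ω‖⁻¹ • ω)
    rw [smul_smul, mul_inv_cancel₀ hn.ne', one_smul] at this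
    linarith [this]
  rw [h2]
  have := mul_le_mul_of_nonneg_left h1 hn.le
  calc ⟪x, ω⟫ = ‖ω‖ * ⟪x, ‖ω‖⁻¹ • ω⟫ := by
        rw [real_inner_smul_right]; field_simp
    _ ≤ ‖ω‖ * h (‖ω‖⁻¹ • ω) := this

lemma active (hcont : Continuous h)
    (ns : (sphere (0 : EuclideanSpace ℝ (Fin n)) 1).Nonempty)
    {z : EuclideanSpace ℝ (Fin n)} (hz : z ∈ frontier (setC h)) :
    ∃ ν : EuclideanSpace ℝ (Fin n), ‖ν‖ = 1 ∧ ⟪z, ν⟫ = h ν ∧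
      ∀ y ∈ setC h, ⟪ν, y - z⟫ ≤ 0 := by
  have hzC : z ∈ setC h := by
    have : z ∈ closure (setC h) := hz.1
    rwa [closedC.closure_eq] at this
  have hzi : z ∉ interior (setC h) := hz.2
  -- minimize g θ = h θ - ⟪z, θ⟫ over sphere
  have hcomp : IsCompact (sphere (0 : EuclideanSpace ℝ (Fin n)) 1) := isCompact_sphere 0 1
  have hgc : ContinuousOn (fun θ => h θ - ⟪z, θ⟫) (sphere (0:EuclideanSpace ℝ (Fin n)) 1) :=
    (hcont.sub (continuous_inner.comp (continuous_const.prodMk continuous_id))).continuousOn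
  obtain ⟨ν, hνs, hmin⟩ := hcomp.exists_isMinOn ns hgc
  have hν1 : ‖ν‖ = 1 := mem_sphere_zero_iff_norm.mp hνs
  have hge : 0 ≤ h ν - ⟪z, ν⟫ := sub_nonneg.mpr (memC_iff.mp hzC ν hν1)
  have hle : h ν - ⟪z, ν⟫ ≤ 0 := by
    by_contra hc
    push_neg at hc
    apply hzi
    rw [mem_interior_iff_mem_nhds, Metric.mem_nhds_iff]
    refine ⟨h ν - ⟪z, ν⟫, hc, fun x hx => ?_⟩
    rw [memC_iff]
    intro θ hθ
    have h1 : h ν - ⟪z, ν⟫ ≤ h θ - ⟪z, θ⟫ := hmin (mem_sphere_zero_iff_norm.mpr hθ)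
    have h2 : ⟪x - z, θ⟫ ≤ ‖x - z‖ := by
      calc ⟪x - z, θ⟫ ≤ ‖x - z‖ * ‖θ‖ := real_inner_le_norm _ _
        _ = ‖x - z‖ := by rw [hθ, mul_one]
    have h3 : ‖x - z‖ < h ν - ⟪z, ν⟫ := by
      rw [← dist_eq_norm]; exact hx
    have : ⟪x, θ⟫ = ⟪z, θ⟫ + ⟪x - z, θ⟫ := by
      rw [← inner_add_left]
      congr 1
      abel
    linarith
  have heq : ⟪z, ν⟫ = h ν := by linarith
  refine ⟨ν, hν1, heq, fun y hy => ?_⟩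
  have := memC_iff.mp hy ν hν1
  rw [inner_sub_right, real_inner_comm y ν, real_inner_comm z ν, heq]
  linarith

lemma support_eq (hcont : Continuous h) (hbd : Bornology.IsBounded (setC h))
    (h0 : (0 : EuclideanSpace ℝ (Fin n)) ∈ interior (setC h))
    (hC1 : UniqueSupport (setC h))
    (ns : (sphere (0 : EuclideanSpace ℝ (Fin n)) 1).Nonempty)
    {u : EuclideanSpace ℝ (Fin n)} (hu : ‖u‖ = 1) :
    ∃ z ∈ setC h, ⟪u, z⟫ = h u ∧ ∀ y ∈ setC h, ⟪u, y - z⟫ ≤ 0 := by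
  have hCc : IsCompact (setC h) := Metric.isCompact_of_isClosed_isBounded closedC hbd
  have hCne : (setC h).Nonempty := ⟨0, interior_subset h0⟩
  have hinc : Continuous fun x : EuclideanSpace ℝ (Fin n) => ⟪u, x⟫ :=
    continuous_inner.comp (continuous_const.prodMk continuous_id)
  obtain ⟨z, hzC, hmax⟩ := hCc.exists_isMaxOn hCne hinc.continuousOn
  have hsup : ∀ y ∈ setC h, ⟪u, y - z⟫ ≤ 0 := by
    intro y hy
    rw [inner_sub_right]
    have := hmax hy
    simpa using this
  -- z is on the frontier
  have hzf : z ∈ frontier (setC h) := by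
    rw [closedC.frontier_eq]
    refine ⟨hzC, fun hzi => ?_⟩
    rw [mem_interior_iff_mem_nhds, Metric.mem_nhds_iff] at hzi
    obtain ⟨ε, hε, hball⟩ := hzi
    have hmem : z + (ε/2) • u ∈ setC h := by
      apply hball
      simp only [mem_ball, dist_eq_norm, add_sub_cancel_left, norm_smul, hu, mul_one,
        Real.norm_eq_abs, abs_of_pos (half_pos hε)]
      exact half_lt_self hε
    have := hsup _ hmem
    rw [add_sub_cancel_left, real_inner_smul_right, real_inner_self_eq_norm_sq, hu] at this
    nlinarith
  obtain ⟨ν, hν1, hνact, hνsup⟩ := active hcont ns hzf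
  have huv : u = ν := hC1 z hzf u (mem_sphere_zero_iff_norm.mpr hu) ν
    (mem_sphere_zero_iff_norm.mpr hν1) hsup hνsup
  refine ⟨z, hzC, ?_, hsup⟩
  rw [huv, real_inner_comm z ν] at *
  exact hνact

lemma gauge_facts (hbd : Bornology.IsBounded (setC h))
    (hconv : Convex ℝ (setC h))
    (h0 : (0 : EuclideanSpace ℝ (Fin n)) ∈ interior (setC h))
    {x : EuclideanSpace ℝ (Fin n)} (hx : x ≠ 0) :
    0 < sSup {τ : ℝ | 0 < τ ∧ τ • x ∈ setC h} ∧
      sSup {τ : ℝ | 0 < τ ∧ τ • x ∈ setC h} • x ∈ setC h ∧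
      sSup {τ : ℝ | 0 < τ ∧ τ • x ∈ setC h} • x ∈ frontier (setC h) := by
  set S := {τ : ℝ | 0 < τ ∧ τ • x ∈ setC h} with hS
  have hxn : (0:ℝ) < ‖x‖ := norm_pos_iff.mpr hx
  obtain ⟨ε, hε, hbsub⟩ : ∃ ε > 0, ball (0:EuclideanSpace ℝ (Fin n)) ε ⊆ setC h := by
    rw [mem_interior_iff_mem_nhds, Metric.mem_nhds_iff] at h0
    exact h0
  have hSne : S.Nonempty := by
    refine ⟨ε / (2 * ‖x‖), ⟨by positivity, hbsub ?_⟩⟩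
    simp only [mem_ball, dist_zero_right, norm_smul, Real.norm_eq_abs]
    rw [abs_of_pos (by positivity)]
    have he : ε / (2 * ‖x‖) * ‖x‖ = ε / 2 := by field_simp
    rw [he]; exact half_lt_self hε
  obtain ⟨M, hM⟩ := (Metric.isBounded_iff_subset_closedBall 0).mp hbd
  have hSbd : BddAbove S := by
    refine ⟨M / ‖x‖, fun τ hτ => ?_⟩
    have h1 : ‖τ • x‖ ≤ M := by
      have := hM hτ.2
      simpa [Metric.mem_closedBall, dist_zero_right] using this
    rw [norm_smul, Real.norm_eq_abs, abs_of_pos hτ.1] at h1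
    rw [le_div_iff₀ hxn]
    exact h1
  have hspos : 0 < sSup S := lt_of_lt_of_le hSne.choose_spec.1 (le_csSup hSbd hSne.choose_spec)
  have hmem : sSup S • x ∈ setC h := by
    have h1 : sSup S ∈ closure S := csSup_mem_closure hSne hSbd
    have h2 : S ⊆ (fun τ : ℝ => τ • x) ⁻¹' setC h := fun τ hτ => hτ.2
    have h3 : IsClosed ((fun τ : ℝ => τ • x) ⁻¹' setC h) :=
      closedC.preimage (continuous_id.smul continuous_const)
    exact (h3.closure_subset_iff.mpr h2) h1
  refine ⟨hspos, hmem, ?_⟩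
  rw [closedC.frontier_eq]
  refine ⟨hmem, fun hi => ?_⟩
  rw [mem_interior_iff_mem_nhds, Metric.mem_nhds_iff] at hi
  obtain ⟨δ, hδ, hbsub'⟩ := hi
  have hkey : sSup S + δ / (2 * ‖x‖) ∈ S := by
    refine ⟨by positivity, hbsub' ?_⟩
    simp only [mem_ball, dist_eq_norm, add_smul]
    rw [add_sub_cancel_left, norm_smul, Real.norm_eq_abs, abs_of_pos (by positivity : (0:ℝ) < δ / (2 * ‖x‖))]
    have he : δ / (2 * ‖x‖) * ‖x‖ = δ / 2 := by field_simp
    rw [he]; exact half_lt_self hδ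
  have := le_csSup hSbd hkey
  have : (0:ℝ) < δ / (2 * ‖x‖) := by positivity
  linarith [le_csSup hSbd hkey]

/-- any admissible affine function dominates, at `P`, the affine
function `ℓ_p(x) = (ω₀/h(ω₀))·(x − p)` built from the tangency point `p`;
consequently `d_K(P) = ℓ_p(P) = ‖P − p‖_C`. -/
theorem optimal_affine_interior_point (n : ℕ) (h : EuclideanSpace ℝ (Fin n) → ℝ)
    (hcont : Continuous h) (hnonneg : ∀ x, 0 ≤ h x) (hhom : IsPosHom h)
    (heven : ∀ x, h (-x) = h x)
    (hbd : Bornology.IsBounded (setC h)) (hconv : Convex ℝ (setC h))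
    (h0 : (0 : EuclideanSpace ℝ (Fin n)) ∈ interior (setC h))
    (hC1 : UniqueSupport (setC h))
    (K : Set (EuclideanSpace ℝ (Fin n))) (hKne : K.Nonempty) (hKcl : IsClosed K)
    (hKconv : Convex ℝ K)
    (P : EuclideanSpace ℝ (Fin n)) (hP : P ∈ interior K)
    (RP : ℝ) (hRP : RP = sInf {d : ℝ | ∃ z ∈ frontier K, d = normC (setC h) (z - P)})
    (hRPpos : 0 < RP)
    (p : EuclideanSpace ℝ (Fin n)) (hp : p ∈ frontier K) (hpd : normC (setC h) (p - P) = RP)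
    (hball : ballC (setC h) P RP ⊆ K)
    (ω₀ : EuclideanSpace ℝ (Fin n)) (hω₀ : ω₀ ∈ sphere (0 : EuclideanSpace ℝ (Fin n)) 1)
    (hnormal : ∀ x ∈ ballC (setC h) P RP, 0 ≤ ⟪ω₀, x - p⟫)
    (hpos : 0 < h ω₀) :
    (∀ ω : EuclideanSpace ℝ (Fin n), ∀ c : ℝ, h ω = 1 → (∀ y ∈ K, 0 ≤ ⟪ω, y⟫ + c) →
        (h ω₀)⁻¹ * ⟪ω₀, P - p⟫ ≤ ⟪ω, P⟫ + c) ∧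
      dK h K P = (h ω₀)⁻¹ * ⟪ω₀, P - p⟫ ∧
      dK h K P = normC (setC h) (P - p) := by
  have ns : (sphere (0 : EuclideanSpace ℝ (Fin n)) 1).Nonempty := ⟨ω₀, hω₀⟩
  have hω₀u : ‖ω₀‖ = 1 := mem_sphere_zero_iff_norm.mp hω₀
  have hxne : p - P ≠ 0 := by
    intro h'
    rw [normC, if_pos h'] at hpd
    linarith
  obtain ⟨hspos, hsmem, hsfr⟩ := gauge_facts hbd hconv h0 hxne
  set s := sSup {τ : ℝ | 0 < τ ∧ τ • (p - P) ∈ setC h} with hs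
  have hpd' : 1 / s = RP := by rwa [normC, if_neg hxne] at hpd
  have hsRP : s = RP⁻¹ := by
    have h1 : s * RP = 1 := by rw [← hpd']; field_simp
    exact eq_inv_of_mul_eq_one_left h1
  set y₀ := s • (p - P) with hy₀
  have hpP : p = P + RP • y₀ := by
    rw [hy₀, hsRP, smul_smul, mul_inv_cancel₀ hRPpos.ne', one_smul]
    abel
  have hsupp₀ : ∀ y ∈ setC h, ⟪-ω₀, y - y₀⟫ ≤ 0 := by
    intro y hy
    have hxb := hnormal _ ⟨y, hy, rfl⟩
    have he : P + RP • y - p = RP • (y - y₀) := by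
      rw [hpP, smul_sub]; abel
    rw [he, real_inner_smul_right] at hxb
    have h2 : 0 ≤ ⟪ω₀, y - y₀⟫ := nonneg_of_mul_nonneg_right hxb hRPpos
    rw [inner_neg_left]; linarith
  have hω₀s : -ω₀ ∈ sphere (0 : EuclideanSpace ℝ (Fin n)) 1 := by
    rw [mem_sphere_zero_iff_norm, norm_neg]; exact hω₀u
  obtain ⟨ν, hν1, hνact, hνsup⟩ := active hcont ns hsfr
  have hνeq : -ω₀ = ν := hC1 y₀ hsfr (-ω₀) hω₀s ν (mem_sphere_zero_iff_norm.mpr hν1) hsupp₀ hνsup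
  have hkey : ⟪ω₀, y₀⟫ = -(h ω₀) := by
    have := hνact
    rw [← hνeq, heven] at this
    simp only [inner_neg_right] at this
    rw [real_inner_comm ω₀ y₀] at this
    linarith
  have hval : ⟪ω₀, P - p⟫ = RP * h ω₀ := by
    have he : P - p = -(RP • y₀) := by rw [hpP]; abel
    rw [he, inner_neg_right, real_inner_smul_right, hkey]; ring
  have hvalinv : (h ω₀)⁻¹ * ⟪ω₀, P - p⟫ = RP := by
    rw [hval]; field_simp
  have h00 : h 0 = 0 := by
    have := hhom 2 (by norm_num) 0
    rw [smul_zero] at this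
    linarith
  have goal1 : ∀ ω : EuclideanSpace ℝ (Fin n), ∀ c : ℝ, h ω = 1 →
      (∀ y ∈ K, 0 ≤ ⟪ω, y⟫ + c) → (h ω₀)⁻¹ * ⟪ω₀, P - p⟫ ≤ ⟪ω, P⟫ + c := by
    intro ω c hω1 hnn
    rw [hvalinv]
    have hωne : ω ≠ 0 := by intro h'; rw [h', h00] at hω1; linarith
    have hωn : (0:ℝ) < ‖ω‖ := norm_pos_iff.mpr hωne
    have hun : ‖(‖ω‖⁻¹ • (-ω) : EuclideanSpace ℝ (Fin n))‖ = 1 := by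
      rw [norm_smul, norm_neg, Real.norm_eq_abs, abs_of_pos (inv_pos.mpr hωn),
        inv_mul_cancel₀ hωn.ne']
    obtain ⟨z, hzC, hz1, _⟩ := support_eq hcont hbd h0 hC1 ns hun
    have hz : ⟪ω, z⟫ = -1 := by
      have hh : h (‖ω‖⁻¹ • (-ω)) = ‖ω‖⁻¹ := by
        rw [hhom ‖ω‖⁻¹ (inv_pos.mpr hωn) (-ω), heven, hω1, mul_one]
      rw [hh, real_inner_smul_left, inner_neg_left] at hz1
      have h4 : -⟪ω, z⟫ = 1 :=
        mul_left_cancel₀ (inv_ne_zero hωn.ne') (hz1.trans (mul_one ‖ω‖⁻¹).symm)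
      linarith
    have hb : P + RP • z ∈ K := hball ⟨z, hzC, rfl⟩
    have := hnn _ hb
    rw [inner_add_right, real_inner_smul_right, hz] at this
    linarith
  have hdK : dK h K P = (h ω₀)⁻¹ * ⟪ω₀, P - p⟫ := by
    have hKsupp : ∀ y ∈ K, 0 ≤ ⟪ω₀, y - p⟫ := by
      have hpne : p ∉ interior K := hp.2
      obtain ⟨f, hf⟩ := geometric_hahn_banach_open_point hKconv.interior isOpen_interior hpne
      set v := (InnerProductSpace.toDual ℝ (EuclideanSpace ℝ (Fin n))).symm f with hv
      have hfv : ∀ w, ⟪v, w⟫ = f w := fun w => InnerProductSpace.toDual_symm_apply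
      have hfle : ∀ y ∈ K, f y ≤ f p := by
        intro y hy
        by_contra hc
        push_neg at hc
        have hPlt : f P < f p := hf P hP
        set b := f y - f p with hb
        have hbpos : 0 < b := by simp [hb]; linarith
        set a := f y - f P with ha
        have hab : b < a := by simp [hb, ha]; linarith
        have hapos : 0 < a := lt_trans hbpos hab
        set t := b / (2 * a) with ht
        have hba1 : b / a < 1 := (div_lt_one hapos).mpr hab
        have hba0 : 0 < b / a := div_pos hbpos hapos
        have ht0 : 0 < t := by positivity
        have ht1 : t < 1 := by
          rw [ht]
          calc b / (2 * a) = (b / a) / 2 := by rw [div_div, mul_comm]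
            _ < 1 / 2 := by linarith
            _ < 1 := by norm_num
        have hmemI : (1 - t) • y + t • P ∈ interior K :=
          hKconv.combo_self_interior_mem_interior hy hP (by linarith) ht0 (by ring)
        have hlt := hf _ hmemI
        rw [map_add, map_smul, map_smul] at hlt
        simp only [smul_eq_mul] at hlt
        have hta : t * a = b / 2 := by rw [ht]; field_simp
        have hexp : (1 - t) * f y + t * f P = f y - t * a := by rw [ha]; ring
        rw [hexp, hta] at hlt
        rw [hb] at hbpos
        linarith
      have hfne : v ≠ 0 := by
        intro h'
        have h1 : f P = 0 := by rw [← hfv P, h', inner_zero_left]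
        have h2 : f p = 0 := by rw [← hfv p, h', inner_zero_left]
        have := hf P hP
        rw [h1, h2] at this
        exact lt_irrefl _ this
      have hvn : (0:ℝ) < ‖v‖ := norm_pos_iff.mpr hfne
      set ν' := ‖v‖⁻¹ • v with hν'
      have hν'u : ν' ∈ sphere (0 : EuclideanSpace ℝ (Fin n)) 1 := by
        rw [mem_sphere_zero_iff_norm, hν', norm_smul, Real.norm_eq_abs,
          abs_of_pos (inv_pos.mpr hvn), inv_mul_cancel₀ hvn.ne']
      have hν'supp : ∀ y ∈ setC h, ⟪ν', y - y₀⟫ ≤ 0 := by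
        intro y hy
        have hbK : P + RP • y ∈ K := hball ⟨y, hy, rfl⟩
        have h1 : f (P + RP • y) ≤ f p := hfle _ hbK
        have h2 : ⟪v, P + RP • y - p⟫ ≤ 0 := by
          rw [hfv, map_sub]; linarith
        have he : P + RP • y - p = RP • (y - y₀) := by rw [hpP, smul_sub]; abel
        rw [he, real_inner_smul_right] at h2
        have h3 : ⟪v, y - y₀⟫ ≤ 0 := nonpos_of_mul_nonpos_right h2 hRPpos
        rw [hν', real_inner_smul_left]
        exact mul_nonpos_of_nonneg_of_nonpos (inv_pos.mpr hvn).le h3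
      have hνeq' : ν' = -ω₀ := hC1 y₀ hsfr ν' hν'u (-ω₀) hω₀s hν'supp hsupp₀
      intro y hy
      have h1 : ⟪v, y - p⟫ ≤ 0 := by
        rw [hfv, map_sub]
        have := hfle y hy
        linarith
      have h2 : ⟪ν', y - p⟫ ≤ 0 := by
        rw [hν', real_inner_smul_left]
        exact mul_nonpos_of_nonneg_of_nonpos (inv_pos.mpr hvn).le h1
      rw [hνeq', inner_neg_left] at h2
      linarith
    set ω' := (h ω₀)⁻¹ • ω₀ with hω'
    have hω'1 : h ω' = 1 := by
      rw [hω', hhom (h ω₀)⁻¹ (inv_pos.mpr hpos) ω₀, inv_mul_cancel₀ hpos.ne']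
    have hmemadm : (h ω₀)⁻¹ * ⟪ω₀, P - p⟫ ∈ admissible h K P := by
      refine ⟨ω', -⟪ω', p⟫, hω'1, fun y hy => ?_, ?_⟩
      · have h5 := hKsupp y hy
        have he : (⟪ω', y⟫ + -⟪ω', p⟫ : ℝ) = (h ω₀)⁻¹ * ⟪ω₀, y - p⟫ := by
          rw [hω', real_inner_smul_left, real_inner_smul_left, inner_sub_right]; ring
        rw [he]
        exact mul_nonneg (inv_pos.mpr hpos).le h5
      · have he : (⟪ω', P⟫ + -⟪ω', p⟫ : ℝ) = (h ω₀)⁻¹ * ⟪ω₀, P - p⟫ := by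
          rw [hω', real_inner_smul_left, real_inner_smul_left, inner_sub_right]; ring
        rw [he]
    have hbdd : BddBelow (admissible h K P) := by
      refine ⟨RP, fun v hv => ?_⟩
      obtain ⟨ω, c, h1, h2, h3⟩ := hv
      rw [h3, ← hvalinv]
      exact goal1 ω c h1 h2
    refine le_antisymm (csInf_le hbdd hmemadm) (le_csInf ⟨_, hmemadm⟩ ?_)
    intro v hv
    obtain ⟨ω, c, h1, h2, h3⟩ := hv
    rw [h3]
    exact goal1 ω c h1 h2
  refine ⟨goal1, hdK, ?_⟩
  have hPpne : P - p ≠ 0 := by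
    intro h'
    apply hxne
    have : p - P = -(P - p) := by abel
    rw [this, h', neg_zero]
  have hSeq : {τ : ℝ | 0 < τ ∧ τ • (P - p) ∈ setC h} = {τ : ℝ | 0 < τ ∧ τ • (p - P) ∈ setC h} := by
    ext τ
    constructor <;> rintro ⟨h1, h2⟩ <;> refine ⟨h1, ?_⟩ <;>
      · have h3 := symmC heven h2
        rw [← smul_neg, neg_sub] at h3
        exact h3
  rw [hdK, hvalinv, normC, if_neg hPpne, hSeq]
  exact hpd'.symm
end
end

section
/- Let K ⊆ ℝⁿ be nonempty, closed, convex, and let P ∈ ℝⁿ ∖ K. Then d_K(P) ≤ −R(P), where R(P) := inf{ ‖z − P‖_C : z ∈ ∂K }; in particular |d_K(P)| ≥ R(P). -/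
open Set Metric
open scoped RealInnerProductSpace Classical
open scoped Pointwise

noncomputable section

variable {n : ℕ} {C : Set (EuclideanSpace ℝ (Fin n))} {M ε : ℝ}

lemma gaugeSet_nonempty (hε : 0 < ε) (hball : ball (0 : EuclideanSpace ℝ (Fin n)) ε ⊆ C)
    {w : EuclideanSpace ℝ (Fin n)} (hw : w ≠ 0) :
    (ε / (2 * ‖w‖)) ∈ {τ : ℝ | 0 < τ ∧ τ • w ∈ C} := by
  have hwn : 0 < ‖w‖ := norm_pos_iff.mpr hw
  have hτ : 0 < ε / (2 * ‖w‖) := by positivity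
  refine ⟨hτ, hball ?_⟩
  simp only [mem_ball, dist_zero_right, norm_smul, Real.norm_eq_abs, abs_of_pos hτ]
  rw [div_mul_eq_mul_div, mul_comm 2 ‖w‖, ← div_div, mul_div_assoc, div_self hwn.ne', mul_one]
  linarith

lemma gaugeSet_bddAbove (hM : C ⊆ closedBall (0 : EuclideanSpace ℝ (Fin n)) M)
    {w : EuclideanSpace ℝ (Fin n)} (hw : w ≠ 0) :
    M / ‖w‖ ∈ upperBounds {τ : ℝ | 0 < τ ∧ τ • w ∈ C} := by
  have hwn : 0 < ‖w‖ := norm_pos_iff.mpr hw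
  rintro τ ⟨hτ, hτC⟩
  have := hM hτC
  simp only [mem_closedBall, dist_zero_right, norm_smul, Real.norm_eq_abs, abs_of_pos hτ] at this
  rw [le_div_iff₀ hwn]
  exact this

lemma gauge_sSup_facts (hcl : IsClosed C) (hM : C ⊆ closedBall (0 : EuclideanSpace ℝ (Fin n)) M)
    (hε : 0 < ε) (hball : ball (0 : EuclideanSpace ℝ (Fin n)) ε ⊆ C)
    {w : EuclideanSpace ℝ (Fin n)} (hw : w ≠ 0) :
    0 < sSup {τ : ℝ | 0 < τ ∧ τ • w ∈ C} ∧ (sSup {τ : ℝ | 0 < τ ∧ τ • w ∈ C}) • w ∈ C ∧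
      sSup {τ : ℝ | 0 < τ ∧ τ • w ∈ C} ≤ M / ‖w‖ := by
  have hwn : 0 < ‖w‖ := norm_pos_iff.mpr hw
  have hne : {τ : ℝ | 0 < τ ∧ τ • w ∈ C}.Nonempty := ⟨_, gaugeSet_nonempty hε hball hw⟩
  have hbdd : BddAbove {τ : ℝ | 0 < τ ∧ τ • w ∈ C} := ⟨_, gaugeSet_bddAbove hM hw⟩
  have h1 : ε / (2 * ‖w‖) ≤ sSup {τ : ℝ | 0 < τ ∧ τ • w ∈ C} :=
    le_csSup hbdd (gaugeSet_nonempty hε hball hw)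
  have hpos : 0 < sSup {τ : ℝ | 0 < τ ∧ τ • w ∈ C} :=
    lt_of_lt_of_le (by positivity) h1
  refine ⟨hpos, ?_, csSup_le hne fun τ hτ => gaugeSet_bddAbove hM hw hτ⟩
  have hmemcl : sSup {τ : ℝ | 0 < τ ∧ τ • w ∈ C} ∈ closure {τ : ℝ | 0 < τ ∧ τ • w ∈ C} :=
    (isLUB_csSup hne hbdd).mem_closure hne
  have hsub : closure {τ : ℝ | 0 < τ ∧ τ • w ∈ C} ⊆ {τ : ℝ | τ • w ∈ C} := by
    apply closure_minimal (fun τ hτ => hτ.2)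
    exact hcl.preimage (by continuity)
  exact hsub hmemcl

lemma normC_eq (hw : w ≠ 0) : normC C w = 1 / sSup {τ : ℝ | 0 < τ ∧ τ • w ∈ C} := by
  simp [normC, hw]

lemma normC_bounds (hcl : IsClosed C) (hM : C ⊆ closedBall (0 : EuclideanSpace ℝ (Fin n)) M)
    (hMpos : 0 < M) (hε : 0 < ε) (hball : ball (0 : EuclideanSpace ℝ (Fin n)) ε ⊆ C)
    {w : EuclideanSpace ℝ (Fin n)} (hw : w ≠ 0) :
    0 < normC C w ∧ ‖w‖ / M ≤ normC C w ∧ normC C w ≤ (2 / ε) * ‖w‖ := by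
  have hwn : 0 < ‖w‖ := norm_pos_iff.mpr hw
  obtain ⟨hpos, _, hle⟩ := gauge_sSup_facts hcl hM hε hball hw
  rw [normC_eq hw]
  have h1 : ε / (2 * ‖w‖) ≤ sSup {τ : ℝ | 0 < τ ∧ τ • w ∈ C} :=
    le_csSup ⟨_, gaugeSet_bddAbove hM hw⟩ (gaugeSet_nonempty hε hball hw)
  refine ⟨by positivity, ?_, ?_⟩
  · rw [div_le_div_iff₀ hMpos hpos, one_mul]
    calc ‖w‖ * sSup {τ : ℝ | 0 < τ ∧ τ • w ∈ C} ≤ ‖w‖ * (M / ‖w‖) := by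
          exact mul_le_mul_of_nonneg_left hle hwn.le
      _ = M := by field_simp
  · rw [div_le_iff₀ hpos]
    have h2 : (2 / ε * ‖w‖) * (ε / (2 * ‖w‖)) = 1 := by field_simp
    calc (1:ℝ) = (2 / ε * ‖w‖) * (ε / (2 * ‖w‖)) := h2.symm
      _ ≤ (2 / ε * ‖w‖) * sSup {τ : ℝ | 0 < τ ∧ τ • w ∈ C} :=
          mul_le_mul_of_nonneg_left h1 (by positivity)
      _ = 2 / ε * ‖w‖ * sSup {τ : ℝ | 0 < τ ∧ τ • w ∈ C} := rfl

lemma gaugeSet_smul {t : ℝ} (ht : 0 < t) (w : EuclideanSpace ℝ (Fin n)) :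
    {τ : ℝ | 0 < τ ∧ τ • (t • w) ∈ C} = (fun σ : ℝ => σ / t) '' {τ : ℝ | 0 < τ ∧ τ • w ∈ C} := by
  ext τ
  constructor
  · rintro ⟨hτ, hτC⟩
    exact ⟨τ * t, ⟨by positivity, by rwa [smul_smul] at hτC⟩, by field_simp⟩
  · rintro ⟨σ, ⟨hσ, hσC⟩, rfl⟩
    refine ⟨by positivity, ?_⟩
    rw [smul_smul, div_mul_cancel₀ _ ht.ne']
    exact hσC

lemma normC_smul (hcl : IsClosed C) (hM : C ⊆ closedBall (0 : EuclideanSpace ℝ (Fin n)) M)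
    (hε : 0 < ε) (hball : ball (0 : EuclideanSpace ℝ (Fin n)) ε ⊆ C)
    {t : ℝ} (ht : 0 < t) (w : EuclideanSpace ℝ (Fin n)) :
    normC C (t • w) = t * normC C w := by
  rcases eq_or_ne w 0 with rfl | hw
  · simp [normC]
  have htw : t • w ≠ 0 := smul_ne_zero ht.ne' hw
  rw [normC_eq hw, normC_eq htw, gaugeSet_smul ht w]
  have hne : {τ : ℝ | 0 < τ ∧ τ • w ∈ C}.Nonempty := ⟨_, gaugeSet_nonempty hε hball hw⟩
  have hbdd : BddAbove {τ : ℝ | 0 < τ ∧ τ • w ∈ C} := ⟨_, gaugeSet_bddAbove hM hw⟩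
  obtain ⟨hpos, -, -⟩ := gauge_sSup_facts hcl hM hε hball hw
  have hlub : IsLUB ((fun σ : ℝ => σ / t) '' {τ : ℝ | 0 < τ ∧ τ • w ∈ C})
      (sSup {τ : ℝ | 0 < τ ∧ τ • w ∈ C} / t) := by
    constructor
    · rintro x ⟨σ, hσ, rfl⟩
      exact div_le_div_of_nonneg_right (le_csSup hbdd hσ) ht.le
    · intro u hu
      rw [div_le_iff₀ ht]
      apply csSup_le hne
      intro σ hσ
      have h3 := hu ⟨σ, hσ, rfl⟩
      rwa [div_le_iff₀ ht] at h3
  rw [hlub.csSup_eq (hne.image _)]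
  rw [one_div, one_div, div_eq_mul_inv, mul_inv, inv_inv, mul_comm]

lemma normC_nonneg (hcl : IsClosed C) (hM : C ⊆ closedBall (0 : EuclideanSpace ℝ (Fin n)) M)
    (hMpos : 0 < M) (hε : 0 < ε) (hball : ball (0 : EuclideanSpace ℝ (Fin n)) ε ⊆ C)
    (w : EuclideanSpace ℝ (Fin n)) : 0 ≤ normC C w := by
  rcases eq_or_ne w 0 with rfl | hw
  · simp [normC]
  · exact (normC_bounds hcl hM hMpos hε hball hw).1.le

lemma normC_lt_one_of_interior (hcl : IsClosed C)
    (hM : C ⊆ closedBall (0 : EuclideanSpace ℝ (Fin n)) M) (hε : 0 < ε)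
    (hball : ball (0 : EuclideanSpace ℝ (Fin n)) ε ⊆ C)
    {v : EuclideanSpace ℝ (Fin n)} (hv : v ∈ interior C) : normC C v < 1 := by
  rcases eq_or_ne v 0 with rfl | hv0
  · simp [normC]
  have hvn : 0 < ‖v‖ := norm_pos_iff.mpr hv0
  obtain ⟨r, hr, hrball⟩ := Metric.isOpen_iff.mp isOpen_interior v hv
  set δ : ℝ := r / (2 * ‖v‖) with hδdef
  have hδ : 0 < δ := by positivity
  have hmem : (1 + δ) • v ∈ C := by
    apply interior_subset
    apply hrball
    simp only [mem_ball, dist_eq_norm]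
    have : (1 + δ) • v - v = δ • v := by
      rw [add_smul, one_smul]; abel
    rw [this, norm_smul, Real.norm_eq_abs, abs_of_pos hδ, hδdef]
    rw [div_mul_eq_mul_div, mul_comm 2 ‖v‖, ← div_div, mul_div_assoc, div_self hvn.ne', mul_one]
    linarith
  have hτ : (1 + δ) ∈ {τ : ℝ | 0 < τ ∧ τ • v ∈ C} := ⟨by linarith, hmem⟩
  have hbdd : BddAbove {τ : ℝ | 0 < τ ∧ τ • v ∈ C} := ⟨_, gaugeSet_bddAbove hM hv0⟩
  have hle : 1 + δ ≤ sSup {τ : ℝ | 0 < τ ∧ τ • v ∈ C} := le_csSup hbdd hτ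
  have hpos : (0:ℝ) < 1 + δ := by linarith
  rw [normC_eq hv0]
  rw [div_lt_one (lt_of_lt_of_le hpos hle)]
  linarith

lemma normC_not_interior (hcl : IsClosed C)
    (hM : C ⊆ closedBall (0 : EuclideanSpace ℝ (Fin n)) M) (hε : 0 < ε)
    (hball : ball (0 : EuclideanSpace ℝ (Fin n)) ε ⊆ C)
    {v : EuclideanSpace ℝ (Fin n)} (hv : normC C v = 1) : v ∉ interior C := by
  intro hint
  have := normC_lt_one_of_interior hcl hM hε hball hint
  rw [hv] at this
  exact lt_irrefl _ this

lemma normC_add_le (hcl : IsClosed C) (hM : C ⊆ closedBall (0 : EuclideanSpace ℝ (Fin n)) M)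
    (hMpos : 0 < M) (hε : 0 < ε) (hball : ball (0 : EuclideanSpace ℝ (Fin n)) ε ⊆ C)
    (hconv : Convex ℝ C) (a b : EuclideanSpace ℝ (Fin n)) :
    normC C (a + b) ≤ normC C a + normC C b := by
  rcases eq_or_ne a 0 with rfl | ha
  · simp [normC]
  rcases eq_or_ne b 0 with rfl | hb
  · simp [normC]
  rcases eq_or_ne (a + b) 0 with hab | hab
  · rw [hab]
    have h1 := (normC_bounds hcl hM hMpos hε hball ha).1
    have h2 := (normC_bounds hcl hM hMpos hε hball hb).1
    have h0 : normC C 0 = 0 := by simp [normC]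
    rw [h0]
    linarith
  obtain ⟨hsa, hsaC, -⟩ := gauge_sSup_facts hcl hM hε hball ha
  obtain ⟨hsb, hsbC, -⟩ := gauge_sSup_facts hcl hM hε hball hb
  set sa := sSup {τ : ℝ | 0 < τ ∧ τ • a ∈ C}
  set sb := sSup {τ : ℝ | 0 < τ ∧ τ • b ∈ C}
  set u : ℝ := sa * sb / (sa + sb) with hu
  have hspos : 0 < sa + sb := by linarith
  have hupos : 0 < u := by positivity
  have hmem : u • (a + b) ∈ C := by
    have hcomb : u • (a + b) = (sb / (sa + sb)) • (sa • a) + (sa / (sa + sb)) • (sb • b) := by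
      rw [smul_smul, smul_smul, smul_add, hu]
      congr 1 <;> congr 1 <;> field_simp <;> ring
    rw [hcomb]
    exact hconv hsaC hsbC (by positivity) (by positivity)
      (by field_simp; ring)
  have hbdd : BddAbove {τ : ℝ | 0 < τ ∧ τ • (a+b) ∈ C} := ⟨_, gaugeSet_bddAbove hM hab⟩
  have hle : u ≤ sSup {τ : ℝ | 0 < τ ∧ τ • (a+b) ∈ C} := le_csSup hbdd ⟨hupos, hmem⟩
  obtain ⟨hsab, -, -⟩ := gauge_sSup_facts hcl hM hε hball hab
  rw [normC_eq hab, normC_eq ha, normC_eq hb]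
  calc 1 / sSup {τ : ℝ | 0 < τ ∧ τ • (a+b) ∈ C} ≤ 1 / u := by
        apply one_div_le_one_div_of_le hupos hle
    _ = 1 / sa + 1 / sb := by rw [hu]; field_simp; ring


lemma mem_setC_iff {h : EuclideanSpace ℝ (Fin n) → ℝ} {x : EuclideanSpace ℝ (Fin n)} :
    x ∈ setC h ↔ ∀ ω : EuclideanSpace ℝ (Fin n), ‖ω‖ = 1 → ⟪x, ω⟫ ≤ h ω := by
  simp [setC, mem_sphere_zero_iff_norm]

lemma setC_isClosed (h : EuclideanSpace ℝ (Fin n) → ℝ) : IsClosed (setC h) := by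
  apply isClosed_biInter
  intro ω hω
  exact isClosed_le (continuous_id.inner continuous_const) continuous_const

lemma h_lower {h : EuclideanSpace ℝ (Fin n) → ℝ} (hhom : IsPosHom h)
    (hε : 0 < ε) (hball : ball (0 : EuclideanSpace ℝ (Fin n)) ε ⊆ setC h)
    (w : EuclideanSpace ℝ (Fin n)) : ε / 2 * ‖w‖ ≤ h w := by
  rcases eq_or_ne w 0 with rfl | hw
  · have h2 : h ((2:ℝ) • (0 : EuclideanSpace ℝ (Fin n))) = 2 * h 0 := hhom 2 two_pos 0
    simp only [smul_zero] at h2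
    simp only [norm_zero, mul_zero]
    linarith
  have hwn : 0 < ‖w‖ := norm_pos_iff.mpr hw
  set u : EuclideanSpace ℝ (Fin n) := ‖w‖⁻¹ • w with hu
  have hun : ‖u‖ = 1 := by
    rw [hu, norm_smul, Real.norm_eq_abs, abs_of_pos (by positivity), inv_mul_cancel₀ hwn.ne']
  have hmem : ((ε/2) • u) ∈ setC h := by
    apply hball
    simp only [mem_ball, dist_zero_right, norm_smul, Real.norm_eq_abs, hun,
      abs_of_pos (show (0:ℝ) < ε/2 by linarith), mul_one]
    linarith
  have hkey : ⟪(ε/2) • u, u⟫ ≤ h u := mem_setC_iff.mp hmem u hun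
  rw [real_inner_smul_left, real_inner_self_eq_norm_sq, hun] at hkey
  have hhu : ε / 2 ≤ h u := by simpa using hkey
  have hw2 : h w = ‖w‖ * h u := by
    have h5 := hhom ‖w‖ hwn u
    have h6 : ‖w‖ • u = w := by rw [hu, smul_smul, mul_inv_cancel₀ hwn.ne', one_smul]
    rw [h6] at h5
    exact h5
  rw [hw2]
  calc ε / 2 * ‖w‖ = ‖w‖ * (ε/2) := by ring
    _ ≤ ‖w‖ * h u := mul_le_mul_of_nonneg_left hhu hwn.le

lemma exists_support_setC {h : EuclideanSpace ℝ (Fin n) → ℝ} (hcont : Continuous h)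
    (hn : 0 < n) {y : EuclideanSpace ℝ (Fin n)} (hyC : y ∈ setC h)
    (hyi : y ∉ interior (setC h)) :
    ∃ θ : EuclideanSpace ℝ (Fin n), ‖θ‖ = 1 ∧ ⟪y, θ⟫ = h θ := by
  by_contra hcon
  push_neg at hcon
  have hnt : Nontrivial (EuclideanSpace ℝ (Fin n)) := by
    refine ⟨0, EuclideanSpace.single ⟨0, hn⟩ (1:ℝ), ?_⟩
    intro hc
    have := congrArg (fun v : EuclideanSpace ℝ (Fin n) => v ⟨0, hn⟩) hc
    simpa using this
  have hsne : (sphere (0 : EuclideanSpace ℝ (Fin n)) 1).Nonempty :=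
    NormedSpace.sphere_nonempty.mpr zero_le_one
  have hscomp : IsCompact (sphere (0 : EuclideanSpace ℝ (Fin n)) 1) := isCompact_sphere 0 1
  have hgcont : Continuous fun θ : EuclideanSpace ℝ (Fin n) => h θ - ⟪y, θ⟫ :=
    hcont.sub (continuous_const.inner continuous_id)
  obtain ⟨θ₀, hθ₀s, hθ₀min⟩ := hscomp.exists_isMinOn hsne hgcont.continuousOn
  set δ : ℝ := h θ₀ - ⟪y, θ₀⟫ with hδdef
  have hθ₀n : ‖θ₀‖ = 1 := mem_sphere_zero_iff_norm.mp hθ₀s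
  have hδpos : 0 < δ := by
    have hle := mem_setC_iff.mp hyC θ₀ hθ₀n
    have hne := hcon θ₀ hθ₀n
    rw [hδdef]
    cases lt_or_eq_of_le hle with
    | inl hlt => linarith
    | inr heq => exact absurd heq hne
  apply hyi
  rw [mem_interior]
  refine ⟨ball y δ, ?_, isOpen_ball, mem_ball_self hδpos⟩
  intro z hz
  rw [mem_setC_iff]
  intro θ hθ
  have hδθ : δ ≤ h θ - ⟪y, θ⟫ := hθ₀min (mem_sphere_zero_iff_norm.mpr hθ)
  have hzy : ‖z - y‖ < δ := by rwa [mem_ball, dist_eq_norm] at hz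
  have hsplit : ⟪z, θ⟫ = ⟪y, θ⟫ + ⟪z - y, θ⟫ := by
    rw [inner_sub_left]; ring
  have hcs : ⟪z - y, θ⟫ ≤ ‖z - y‖ := by
    calc ⟪z - y, θ⟫ ≤ ‖z - y‖ * ‖θ‖ := real_inner_le_norm _ _
      _ = ‖z - y‖ := by rw [hθ, mul_one]
  linarith


set_option maxHeartbeats 2000000 in
/-- for `P ∉ K`, `d_K(P) ≤ −R(P)` where
`R(P) = inf{‖z − P‖_C : z ∈ ∂K}`; in particular `|d_K(P)| ≥ R(P)`. -/
theorem dK_le_neg_dist_outside (n : ℕ) (h : EuclideanSpace ℝ (Fin n) → ℝ)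
    (hcont : Continuous h) (hnonneg : ∀ x, 0 ≤ h x) (hhom : IsPosHom h)
    (heven : ∀ x, h (-x) = h x)
    (hbd : Bornology.IsBounded (setC h)) (hconv : Convex ℝ (setC h))
    (h0 : (0 : EuclideanSpace ℝ (Fin n)) ∈ interior (setC h))
    (hC1 : UniqueSupport (setC h))
    (K : Set (EuclideanSpace ℝ (Fin n))) (hKne : K.Nonempty) (hKcl : IsClosed K)
    (hKconv : Convex ℝ K)
    (P : EuclideanSpace ℝ (Fin n)) (hP : P ∉ K) :
    dK h K P ≤ -sInf {d : ℝ | ∃ z ∈ frontier K, d = normC (setC h) (z - P)} ∧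
      sInf {d : ℝ | ∃ z ∈ frontier K, d = normC (setC h) (z - P)} ≤ |dK h K P| := by
  classical
  obtain ⟨y₀, hy₀⟩ := hKne
  -- the case n = 0 is vacuous
  rcases Nat.eq_zero_or_pos n with hn0 | hn
  · exfalso
    apply hP
    subst hn0
    have : P = y₀ := by ext i; exact i.elim0
    rw [this]; exact hy₀
  have hCcl : IsClosed (setC h) := setC_isClosed h
  -- a small euclidean ball inside C
  obtain ⟨ε, hε, hball⟩ : ∃ ε > 0, ball (0 : EuclideanSpace ℝ (Fin n)) ε ⊆ setC h := by
    rcases Metric.mem_nhds_iff.mp (mem_interior_iff_mem_nhds.mp h0) with ⟨ε, hε, hb⟩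
    exact ⟨ε, hε, hb⟩
  -- a big ball containing C
  obtain ⟨M₀, hM₀⟩ := (Metric.isBounded_iff_subset_closedBall 0).mp hbd
  set M : ℝ := max M₀ 1 with hMdef
  have hM : setC h ⊆ closedBall 0 M :=
    hM₀.trans (closedBall_subset_closedBall (le_max_left _ _))
  have hMpos : (0:ℝ) < M := lt_of_lt_of_le one_pos (le_max_right _ _)
  -- the anisotropic distance function
  set f : EuclideanSpace ℝ (Fin n) → ℝ := fun z => normC (setC h) (z - P) with hfdef
  have hf_nonneg : ∀ z, 0 ≤ f z := fun z => normC_nonneg hCcl hM hMpos hε hball _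
  have hf_lb : ∀ z, M * f z ≥ ‖z - P‖ := by
    intro z
    rcases eq_or_ne (z - P) 0 with hz | hz
    · rw [hz, norm_zero]
      exact mul_nonneg hMpos.le (hf_nonneg z)
    · have := (normC_bounds hCcl hM hMpos hε hball hz).2.1
      rw [ge_iff_le, ← div_le_iff₀' hMpos]
      exact this
  have hf_lip : ∀ z z', f z ≤ f z' + (2/ε) * ‖z - z'‖ := by
    intro z z'
    have h1 : z - P = (z' - P) + (z - z') := by abel
    have h2 : f z ≤ f z' + normC (setC h) (z - z') := by
      rw [hfdef]
      simp only
      rw [h1]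
      exact normC_add_le hCcl hM hMpos hε hball hconv _ _
    rcases eq_or_ne (z - z') 0 with hzz | hzz
    · rw [hzz, norm_zero]
      rw [hzz] at h2
      have h0' : normC (setC h) 0 = 0 := by simp [normC]
      rw [h0'] at h2
      linarith
    · have h3 := (normC_bounds hCcl hM hMpos hε hball hzz).2.2
      linarith
  have hf_cont : Continuous f := by
    rw [Metric.continuous_iff]
    intro z δ hδ
    have hd1 : (0:ℝ) < 2/ε := div_pos two_pos hε
    refine ⟨δ / (2/ε + 1), div_pos hδ (by linarith), fun z' hz' => ?_⟩
    rw [Real.dist_eq]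
    rw [dist_eq_norm] at hz'
    have l1 := hf_lip z' z
    have l2 := hf_lip z z'
    have hnorm : ‖z - z'‖ = ‖z' - z‖ := norm_sub_rev _ _
    have hb1 : (2/ε) * ‖z' - z‖ < δ := by
      have hεpos : (0:ℝ) < 2/ε := div_pos two_pos hε
      calc (2/ε) * ‖z' - z‖ ≤ (2/ε + 1) * ‖z' - z‖ := by nlinarith [norm_nonneg (z' - z)]
        _ < (2/ε + 1) * (δ / (2/ε + 1)) := by
            apply mul_lt_mul_of_pos_left hz' (by positivity)
        _ = δ := by field_simp
    rw [abs_lt]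
    constructor <;> [skip; skip] <;> rw [hnorm] at l2 <;> nlinarith
  -- a minimiser z* of f on K
  have hy₀P : y₀ ≠ P := fun hc => hP (hc ▸ hy₀)
  set r : ℝ := M * f y₀ + 1 with hrdef
  have hy₀B : y₀ ∈ K ∩ closedBall P r := by
    refine ⟨hy₀, ?_⟩
    rw [mem_closedBall, dist_eq_norm]
    have := hf_lb y₀
    linarith
  have hBcomp : IsCompact (K ∩ closedBall P r) :=
    (isCompact_closedBall P r).inter_left hKcl
  obtain ⟨zs, hzsB, hzsmin'⟩ := hBcomp.exists_isMinOn ⟨y₀, hy₀B⟩ hf_cont.continuousOn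
  have hzsK : zs ∈ K := hzsB.1
  have hzsmin : ∀ z ∈ K, f zs ≤ f z := by
    intro z hz
    by_cases hzB : z ∈ closedBall P r
    · exact hzsmin' ⟨hz, hzB⟩
    · have hfy₀ : f zs ≤ f y₀ := hzsmin' hy₀B
      have hzr : r < ‖z - P‖ := by
        rw [mem_closedBall, dist_eq_norm, not_le] at hzB
        exact hzB
      have := hf_lb z
      calc f zs ≤ f y₀ := hfy₀
        _ ≤ f z := by
            rw [hrdef] at hzr
            have hMf : M * f z > M * f y₀ + 1 := by linarith
            nlinarith
  -- basic facts about z*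
  have hzsP : zs ≠ P := fun hc => hP (hc ▸ hzsK)
  have hwne : zs - P ≠ 0 := sub_ne_zero.mpr hzsP
  set ρ : ℝ := f zs with hρdef
  have hρpos : 0 < ρ := by
    have := (normC_bounds hCcl hM hMpos hε hball hwne).1
    exact this
  -- z* lies on the frontier of K
  have hzsf : zs ∈ frontier K := by
    rw [hKcl.frontier_eq]
    refine ⟨hzsK, fun hint => ?_⟩
    obtain ⟨r', hr', hr'ball⟩ := Metric.isOpen_iff.mp isOpen_interior zs hint
    have hPzs : 0 < ‖P - zs‖ := by
      rw [norm_sub_rev, ← dist_eq_norm]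
      exact dist_pos.mpr hzsP
    set t : ℝ := min (1/2) (r' / (2 * ‖P - zs‖)) with htdef
    have ht0 : 0 < t := by
      apply lt_min (by norm_num)
      positivity
    have ht1 : t < 1 := lt_of_le_of_lt (min_le_left _ _) (by norm_num)
    have hz'K : zs + t • (P - zs) ∈ K := by
      apply interior_subset
      apply hr'ball
      rw [mem_ball, dist_eq_norm]
      have : zs + t • (P - zs) - zs = t • (P - zs) := by abel
      rw [this, norm_smul, Real.norm_eq_abs, abs_of_pos ht0]
      calc t * ‖P - zs‖ ≤ (r' / (2 * ‖P - zs‖)) * ‖P - zs‖ := by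
            apply mul_le_mul_of_nonneg_right (min_le_right _ _) hPzs.le
        _ = r' / 2 := by field_simp
        _ < r' := by linarith
    have hfz' : f (zs + t • (P - zs)) = (1 - t) * ρ := by
      have hdiff : zs + t • (P - zs) - P = (1 - t) • (zs - P) := by
        module
      show normC (setC h) (zs + t • (P - zs) - P) = (1 - t) * ρ
      rw [hdiff, normC_smul hCcl hM hε hball (by linarith : (0:ℝ) < 1 - t)]
    have := hzsmin _ hz'K
    rw [hfz'] at this
    nlinarith
  -- identification of the infimum R with ρ
  have hRρ : sInf {d : ℝ | ∃ z ∈ frontier K, d = normC (setC h) (z - P)} = ρ := by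
    apply le_antisymm
    · apply csInf_le
      · exact ⟨0, by rintro d ⟨z, hz, rfl⟩; exact normC_nonneg hCcl hM hMpos hε hball _⟩
      · exact ⟨zs, hzsf, rfl⟩
    · refine le_csInf ⟨normC (setC h) (zs - P), ⟨zs, hzsf, rfl⟩⟩ ?_
      rintro d ⟨z, hz, rfl⟩
      exact hzsmin z (hKcl.frontier_subset hz)
  -- the open anisotropic ball of radius ρ around P is disjoint from K
  set D : Set (EuclideanSpace ℝ (Fin n)) :=
    (fun x => P + x) '' (ρ • interior (setC h)) with hDdef
  have hDmem : ∀ x, x ∈ D ↔ ∃ v ∈ interior (setC h), x = P + ρ • v := by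
    intro x
    simp only [hDdef, Set.mem_image, Set.mem_smul_set]
    constructor
    · rintro ⟨-, ⟨v, hv, rfl⟩, rfl⟩; exact ⟨v, hv, rfl⟩
    · rintro ⟨v, hv, rfl⟩; exact ⟨ρ • v, ⟨v, hv, rfl⟩, rfl⟩
  have hDopen : IsOpen D :=
    (isOpenMap_add_left P) _ (isOpen_interior.smul₀ hρpos.ne')
  have hDconv : Convex ℝ D := by
    rw [hDdef]
    have h1 : Convex ℝ (interior (setC h)) := hconv.interior
    exact (h1.smul ρ).translate P
  have hDdisj : Disjoint D K := by
    rw [Set.disjoint_left]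
    intro x hxD hxK
    obtain ⟨v, hv, rfl⟩ := (hDmem x).mp hxD
    have h1 : f (P + ρ • v) = ρ * normC (setC h) v := by
      show normC (setC h) (P + ρ • v - P) = ρ * normC (setC h) v
      rw [add_sub_cancel_left, normC_smul hCcl hM hε hball hρpos]
    have h2 : normC (setC h) v < 1 := normC_lt_one_of_interior hCcl hM hε hball hv
    have h3 := hzsmin _ hxK
    rw [h1] at h3
    nlinarith
  -- separating hyperplane
  obtain ⟨fℓ, α, hfα, hαf⟩ := geometric_hahn_banach_open hDconv hDopen hKconv hDdisj
  set ω : EuclideanSpace ℝ (Fin n) := (InnerProductSpace.toDual ℝ _).symm fℓ with hωdef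
  have hωapp : ∀ x, ⟪ω, x⟫ = fℓ x := fun x => InnerProductSpace.toDual_symm_apply
  have hPD : P ∈ D := (hDmem P).mpr ⟨0, h0, by rw [smul_zero, add_zero]⟩
  have hωne : ω ≠ 0 := by
    intro hc
    have h1 : fℓ P < α := hfα P hPD
    have h2 : α ≤ fℓ y₀ := hαf y₀ hy₀
    rw [← hωapp, hc, inner_zero_left] at h1 h2
    linarith
  -- the contact point y on the frontier of C
  set y : EuclideanSpace ℝ (Fin n) := ρ⁻¹ • (zs - P) with hydef
  have hzsy : zs = P + ρ • y := by
    rw [hydef, smul_smul, mul_inv_cancel₀ hρpos.ne', one_smul]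
    abel
  have hyC : y ∈ setC h := by
    obtain ⟨hs, hsC, -⟩ := gauge_sSup_facts hCcl hM hε hball hwne
    have hρeq : ρ = 1 / sSup {τ : ℝ | 0 < τ ∧ τ • (zs - P) ∈ setC h} := normC_eq hwne
    have : ρ⁻¹ = sSup {τ : ℝ | 0 < τ ∧ τ • (zs - P) ∈ setC h} := by
      rw [hρeq, one_div, inv_inv]
    rw [hydef, this]
    exact hsC
  have hynorm : normC (setC h) y = 1 := by
    rw [hydef, normC_smul hCcl hM hε hball (inv_pos.mpr hρpos)]
    have hnp : normC (setC h) (zs - P) = ρ := rfl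
    rw [hnp, inv_mul_cancel₀ hρpos.ne']
  have hyfr : y ∈ frontier (setC h) := by
    rw [hCcl.frontier_eq]
    exact ⟨hyC, normC_not_interior hCcl hM hε hball hynorm⟩
  -- half space inequality on all of C
  have hsupα : ∀ x ∈ setC h, ⟪ω, P⟫ + ρ * ⟪ω, x⟫ ≤ α := by
    intro x hx
    have hkey : ∀ t : ℝ, 0 < t → t < 1 → ⟪ω, P⟫ + ρ * ((1 - t) * ⟪ω, x⟫) < α := by
      intro t ht0 ht1
      have hxt : (1 - t) • x ∈ interior (setC h) := by
        have := hconv.combo_interior_closure_mem_interior h0 (subset_closure hx)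
          ht0 (by linarith : (0:ℝ) ≤ 1 - t) (by ring)
        rwa [smul_zero, zero_add] at this
      have hmem : P + ρ • ((1 - t) • x) ∈ D := (hDmem _).mpr ⟨_, hxt, rfl⟩
      have := hfα _ hmem
      rw [← hωapp] at this
      rw [inner_add_right, real_inner_smul_right, real_inner_smul_right] at this
      linarith
    by_contra hcon
    push_neg at hcon
    set a : ℝ := ⟪ω, x⟫
    set β : ℝ := ⟪ω, P⟫ + ρ * a with hβ
    rcases le_or_gt a 0 with ha | ha
    · have := hkey (1/2) (by norm_num) (by norm_num)
      nlinarith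
    · set t : ℝ := min (1/2) ((β - α) / (2 * ρ * a)) with htdef
      have hβα : 0 < β - α := by rw [hβ]; linarith
      have ht0 : 0 < t := by
        apply lt_min (by norm_num)
        positivity
      have ht1 : t < 1 := lt_of_le_of_lt (min_le_left _ _) (by norm_num)
      have := hkey t ht0 ht1
      have hta : ρ * t * a ≤ (β - α) / 2 := by
        calc ρ * t * a ≤ ρ * ((β - α) / (2 * ρ * a)) * a := by
              apply mul_le_mul_of_nonneg_right _ ha.le
              exact mul_le_mul_of_nonneg_left (min_le_right _ _) hρpos.le
          _ = (β - α) / 2 := by field_simp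
      nlinarith
  -- value of α
  have hαzs : α ≤ ⟪ω, P⟫ + ρ * ⟪ω, y⟫ := by
    have := hαf zs hzsK
    rw [← hωapp, hzsy, inner_add_right, real_inner_smul_right] at this
    exact this
  have hαeq : α = ⟪ω, P⟫ + ρ * ⟪ω, y⟫ := le_antisymm hαzs (hsupα y hyC)
  -- ω supports C at y
  have hsup : ∀ x ∈ setC h, ⟪ω, x - y⟫ ≤ 0 := by
    intro x hx
    have := hsupα x hx
    rw [hαeq] at this
    rw [inner_sub_right]
    nlinarith
  -- the canonical support direction θ at y
  obtain ⟨θ, hθn, hθeq⟩ := exists_support_setC hcont hn hyC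
    (normC_not_interior hCcl hM hε hball hynorm)
  have hθsup : ∀ x ∈ setC h, ⟪θ, x - y⟫ ≤ 0 := by
    intro x hx
    rw [inner_sub_right]
    have h1 : ⟪θ, x⟫ ≤ h θ := by
      rw [real_inner_comm]
      exact mem_setC_iff.mp hx θ hθn
    have h2 : ⟪θ, y⟫ = h θ := by rw [real_inner_comm]; exact hθeq
    linarith
  -- unique support: ω/‖ω‖ = θ
  have hωn : 0 < ‖ω‖ := norm_pos_iff.mpr hωne
  have hω₁sup : ∀ x ∈ setC h, ⟪‖ω‖⁻¹ • ω, x - y⟫ ≤ 0 := by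
    intro x hx
    rw [real_inner_smul_left]
    exact mul_nonpos_of_nonneg_of_nonpos (by positivity) (hsup x hx)
  have hω₁mem : ‖ω‖⁻¹ • ω ∈ sphere (0 : EuclideanSpace ℝ (Fin n)) 1 := by
    rw [mem_sphere_zero_iff_norm, norm_smul, Real.norm_eq_abs, abs_of_pos (by positivity),
      inv_mul_cancel₀ hωn.ne']
  have hθmem : θ ∈ sphere (0 : EuclideanSpace ℝ (Fin n)) 1 := mem_sphere_zero_iff_norm.mpr hθn
  have hωθ : ‖ω‖⁻¹ • ω = θ := hC1 y hyfr _ hω₁mem _ hθmem hω₁sup hθsup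
  -- h(ω) = ⟪ω, y⟫ > 0
  have hωθ' : ω = ‖ω‖ • θ := by
    rw [← hωθ, smul_smul, mul_inv_cancel₀ hωn.ne', one_smul]
  have hhθpos : 0 < h θ := by
    have := h_lower hhom hε hball θ
    rw [hθn] at this
    linarith
  have hωy : ⟪ω, y⟫ = h ω := by
    rw [hωθ', real_inner_smul_left, hhom ‖ω‖ hωn θ]
    rw [real_inner_comm, hθeq]
  have hhω : 0 < h ω := by
    rw [hωθ', hhom ‖ω‖ hωn θ]
    positivity
  -- the admissible affine function realising −ρ
  have hadm : -ρ ∈ admissible h K P := by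
    refine ⟨(h ω)⁻¹ • ω, -((h ω)⁻¹ * α), ?_, ?_, ?_⟩
    · rw [hhom (h ω)⁻¹ (inv_pos.mpr hhω) ω, inv_mul_cancel₀ hhω.ne']
    · intro k hk
      rw [real_inner_smul_left]
      have h1 : α ≤ ⟪ω, k⟫ := by rw [hωapp]; exact hαf k hk
      have h2 : (h ω)⁻¹ * α ≤ (h ω)⁻¹ * ⟪ω, k⟫ :=
        mul_le_mul_of_nonneg_left h1 (inv_pos.mpr hhω).le
      linarith
    · rw [real_inner_smul_left]
      rw [hαeq, hωy]
      field_simp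
      ring
  -- admissible set is bounded below
  have hbddadm : BddBelow (admissible h K P) := by
    refine ⟨-(2/ε * ‖P - y₀‖), ?_⟩
    rintro v ⟨ω', c', hω'1, hω'K, rfl⟩
    have hω'ne : ω' ≠ 0 := by
      intro hc
      have h00 : h ((2:ℝ) • (0 : EuclideanSpace ℝ (Fin n))) = 2 * h 0 := hhom 2 two_pos 0
      rw [smul_zero] at h00
      rw [hc] at hω'1
      linarith
    have hω'norm : ‖ω'‖ ≤ 2/ε := by
      have hl := h_lower hhom hε hball ω'
      rw [hω'1] at hl
      rw [le_div_iff₀ hε]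
      nlinarith [norm_nonneg ω']
    have h1 : 0 ≤ ⟪ω', y₀⟫ + c' := hω'K y₀ hy₀
    have h2 : ⟪ω', P⟫ + c' ≥ ⟪ω', P - y₀⟫ := by
      rw [inner_sub_right]
      linarith
    have h3 : |⟪ω', P - y₀⟫| ≤ ‖ω'‖ * ‖P - y₀‖ := abs_real_inner_le_norm _ _
    have h4 : ‖ω'‖ * ‖P - y₀‖ ≤ 2/ε * ‖P - y₀‖ :=
      mul_le_mul_of_nonneg_right hω'norm (norm_nonneg _)
    have h5 : -(2/ε * ‖P - y₀‖) ≤ ⟪ω', P - y₀⟫ := by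
      have := neg_abs_le ⟪ω', P - y₀⟫
      linarith
    linarith
  have hdKρ : dK h K P ≤ -ρ := csInf_le hbddadm hadm
  constructor
  · rw [hRρ]; exact hdKρ
  · rw [hRρ]
    calc ρ ≤ -(dK h K P) := by linarith
      _ ≤ |dK h K P| := neg_le_abs _
end
end
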